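/- arXiv:1612.08364 — 5 statements merged into one kernel-verified Lean document; each statement's English description precedes it below -/
import Mathlib

section
/- Let F : ℂ → ℂ be an entire (holomorphic on all of ℂ) function such that F(z + λ) − F(z) ∈ Λ_γ for every λ ∈ Λ_γ and every z ∈ ℂ. Then there exist a, b ∈ ℂ such that F(z) = a·z + b for all z ∈ ℂ (i.e., every holomorphic self-map of the complex torus X_γ lifts to an affine map of ℂ). -/
/-!
For `l ∈ Λ_γ` the continuous function `z ↦ F (z + l) - F z` takes values in the discrete set
`Λ_γ`, so it is constant. Hence `F'` is `Λ_γ`-periodic, so its range is the image of a compact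
fundamental parallelogram; being bounded and entire, `F'` is constant by Liouville's theorem.
-/

open Complex

/-- The lattice `Λ_γ ⊆ ℂ` generated by `1` and `γ`. -/
noncomputable def Lambda (γ : ℂ) : AddSubgroup ℂ := AddSubgroup.closure {1, γ}

theorem eq_mul_add_of_deriv_eq_const {𝕜 : Type*} [RCLike 𝕜] {f : 𝕜 → 𝕜} {a : 𝕜}
    (hf : Differentiable 𝕜 f) (hf' : ∀ x, deriv f x = a) (x : 𝕜) : f x = a * x + f 0 := by
  have hg (y : 𝕜) : HasDerivAt (fun x ↦ f x - a * x) 0 y := by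
    have := (hf y).hasDerivAt.sub ((hasDerivAt_id' y).const_mul a)
    rwa [hf', mul_one, sub_self] at this
  have := is_const_of_deriv_eq_zero (fun y ↦ (hg y).differentiableAt) (fun y ↦ (hg y).deriv) x 0
  linear_combination this

theorem periodic_deriv_of_add_sub_eq_const {𝕜 E : Type*} [NontriviallyNormedField 𝕜]
    [NormedAddCommGroup E] [NormedSpace 𝕜 E] {f : 𝕜 → E} {l : 𝕜} {c : E}
    (h : ∀ x, f (x + l) - f x = c) : Function.Periodic (deriv f) l := by
  have hshift : (fun x ↦ f (x + l)) = fun x ↦ f x + c := funext fun x ↦ by rw [← h x]; abel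
  intro x
  rw [← deriv_comp_add_const, hshift, deriv_add_const]

theorem exists_affine_of_add_sub_mem_zLattice (L : Submodule ℤ ℂ) [DiscreteTopology L]
    [IsZLattice ℝ L] {F : ℂ → ℂ} (hF : Differentiable ℂ F)
    (hper : ∀ l ∈ L, ∀ z, F (z + l) - F z ∈ L) : ∃ a b : ℂ, ∀ z, F z = a * z + b := by
  have hjump_const (l : ℂ) (hl : l ∈ L) (z : ℂ) : F (z + l) - F z = F (0 + l) - F 0 :=
    isPreconnected_univ.constant_of_mapsTo (isDiscrete_iff_discreteTopology.mpr ‹_›)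
      ((hF.continuous.comp (continuous_add_const l)).sub hF.continuous).continuousOn
      (fun z _ ↦ hper l hl z) (Set.mem_univ z) (Set.mem_univ 0)
  have hderiv_periodic (z w : ℂ) (hw : w ∈ L) : deriv F (z + w) = deriv F z :=
    periodic_deriv_of_add_sub_eq_const (hjump_const w hw) z
  have hbounded := (IsZLattice.isCompact_range_of_periodic L _ hF.deriv.continuous
    hderiv_periodic).isBounded
  exact ⟨deriv F 0, F 0, eq_mul_add_of_deriv_eq_const hF
    fun z ↦ hF.deriv.apply_eq_apply_of_bounded hbounded z 0⟩

theorem linearIndependent_one_of_im_ne_zero {γ : ℂ} (hγ : γ.im ≠ 0) :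
    LinearIndependent ℝ ![1, γ] :=
  (LinearIndependent.pair_iff' one_ne_zero).mpr fun a ha ↦ hγ (by simp [← ha])

theorem Lambda_eq_toAddSubgroup_lattice {γ : ℂ} (hγ : γ.im ≠ 0) :
    Lambda γ =
      (PeriodPair.lattice ⟨1, γ, linearIndependent_one_of_im_ne_zero hγ⟩).toAddSubgroup := by
  rw [Lambda, PeriodPair.lattice, Submodule.span_int_eq_addSubgroupClosure]

/-- Every entire function `F : ℂ → ℂ` such that `F (z + λ) - F z ∈ Λ_γ` for all `λ ∈ Λ_γ`
and all `z` (i.e. every holomorphic self-map of the torus `X_γ` lifted to `ℂ`) is affine. -/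
theorem entire_lattice_periodic_is_affine (γ : ℂ) (hγ : 0 < γ.im)
    (F : ℂ → ℂ) (hF : Differentiable ℂ F)
    (hper : ∀ l ∈ Lambda γ, ∀ z : ℂ, F (z + l) - F z ∈ Lambda γ) :
    ∃ a b : ℂ, ∀ z : ℂ, F z = a * z + b := by
  rw [Lambda_eq_toAddSubgroup_lattice hγ.ne'] at hper
  exact exists_affine_of_add_sub_mem_zLattice _ hF hper
end

section
/- Let F : ℂ → ℂ be a function such that z ↦ F(conj(z)) is entire, F(z + λ) − F(z) ∈ Λ_γ for every λ ∈ Λ_γ and every z ∈ ℂ, and F(F(z)) − z ∈ Λ_γ for every z ∈ ℂ (so F induces an anti-holomorphic involution of X_γ). Then there exist a, b ∈ ℂ such that F(z) = a·conj(z) + b for all z, with a·conj(a) = 1, a·conj(Λ_γ) = Λ_γ, and a·conj(b) + b ∈ Λ_γ. (This is the general form of the anti-holomorphic involutions t_y ∘ α_{(−,a)} of Table 5.) -/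
/-!
`Λ_γ` is discrete, so every continuous `Λ_γ`-valued function on `ℂ` is constant; in particular
`F (z + l) - F z = F l - F 0`. The entire function `conj ∘ F` therefore has a `Λ_γ`-periodic
derivative, which is bounded and hence constant by Liouville, so `F z = a * conj z + b`. Then
`F (F z) - z = (a * conj a - 1) * z + (a * conj b + b)` is again continuous and `Λ_γ`-valued, hence
constant, which forces `a * conj a = 1` and `a * conj b + b ∈ Λ_γ`; and `F l - F 0 = a * conj l`
shows that the involution `l ↦ a * conj l` maps `Λ_γ` into, hence onto, itself.
-/

open Complex ComplexConjugate

namespace PeriodPair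

variable (L : PeriodPair)

lemma eq_of_continuous_of_forall_mem_lattice {X : Type*} [TopologicalSpace X]
    [PreconnectedSpace X] {f : X → ℂ} (hf : Continuous f) (h : ∀ x, f x ∈ L.lattice)
    (x y : X) : f x = f y :=
  isPreconnected_univ.constant_of_mapsTo
    (isDiscrete_iff_discreteTopology.mpr (inferInstanceAs (DiscreteTopology L.lattice)))
    hf.continuousOn (fun x _ => h x) trivial trivial

lemma eq_of_differentiable_of_periodic {f : ℂ → ℂ} (hf : Differentiable ℂ f)
    (hper : ∀ z, ∀ l ∈ L.lattice, f (z + l) = f z) (z w : ℂ) : f z = f w :=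
  hf.apply_eq_apply_of_bounded
    (IsZLattice.isCompact_range_of_periodic L.lattice f hf.continuous hper).isBounded z w

lemma exists_eq_mul_add_of_add_sub_eq {f : ℂ → ℂ} (hf : Differentiable ℂ f)
    (hadd : ∀ l ∈ L.lattice, ∀ z, f (z + l) - f z = f l - f 0) :
    ∃ a b, ∀ z, f z = a * z + b := by
  have hper : ∀ z, ∀ l ∈ L.lattice, deriv f (z + l) = deriv f z := by
    intro z l hl
    have htranslate : (fun w => f (w + l)) = fun w => f w + (f l - f 0) :=
      funext fun w => by rw [← hadd l hl w]; ring
    rw [← deriv_comp_add_const, htranslate, deriv_add_const]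
  have hderiv := L.eq_of_differentiable_of_periodic
    (fun z => (hf.analyticAt z).deriv.differentiableAt) hper
  refine ⟨deriv f 0, f 0, fun z => ?_⟩
  refine isOpen_univ.eqOn_of_deriv_eq (g := fun w => deriv f 0 * w + f 0) isPreconnected_univ
    hf.differentiableOn (by fun_prop) (fun w _ => ?_) (Set.mem_univ 0) (by simp) (Set.mem_univ z)
  simp [hderiv w 0]

end PeriodPair

namespace Lambda

noncomputable def periodPair (γ : ℂ) (hγ : γ.im ≠ 0) : PeriodPair where
  ω₁ := 1
  ω₂ := γ
  indep := LinearIndependent.pair_iff.mpr fun s t h => by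
    have ht : t * γ.im = 0 := by simpa using congrArg im h
    obtain rfl : t = 0 := (mul_eq_zero.mp ht).resolve_right hγ
    simpa using h

lemma mem_lattice_periodPair_iff {γ : ℂ} (hγ : γ.im ≠ 0) {x : ℂ} :
    x ∈ (periodPair γ hγ).lattice ↔ x ∈ Lambda γ := by
  rw [Lambda, ← Submodule.span_int_eq_addSubgroupClosure]
  rfl

lemma eq_of_continuous_of_forall_mem {γ : ℂ} (hγ : γ.im ≠ 0) {f : ℂ → ℂ} (hf : Continuous f)
    (h : ∀ z, f z ∈ Lambda γ) (z w : ℂ) : f z = f w :=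
  (periodPair γ hγ).eq_of_continuous_of_forall_mem_lattice hf
    (fun z => (mem_lattice_periodPair_iff hγ).mpr (h z)) z w

end Lambda

/-- General form of anti-holomorphic involutions of the elliptic curve `X_γ`, lifted to `ℂ`:
if `z ↦ F (conj z)` is entire, `F` is `Λ_γ`-equivariant modulo `Λ_γ`, and `F ∘ F` is the
identity modulo `Λ_γ`, then `F z = a * conj z + b` with `a * conj a = 1`,
`a • conj (Λ_γ) = Λ_γ` and `a * conj b + b ∈ Λ_γ`. -/
theorem antiholomorphic_involution_form (γ : ℂ) (hγ : 0 < γ.im)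
    (F : ℂ → ℂ) (hF : Differentiable ℂ (fun z => F (starRingEnd ℂ z)))
    (hper : ∀ l ∈ Lambda γ, ∀ z : ℂ, F (z + l) - F z ∈ Lambda γ)
    (hinv : ∀ z : ℂ, F (F z) - z ∈ Lambda γ) :
    ∃ a b : ℂ, (∀ z : ℂ, F z = a * starRingEnd ℂ z + b) ∧
      a * starRingEnd ℂ a = 1 ∧
      (fun l => a * starRingEnd ℂ l) '' (Lambda γ : Set ℂ) = (Lambda γ : Set ℂ) ∧
      a * starRingEnd ℂ b + b ∈ Lambda γ := by
  have hγ0 : γ.im ≠ 0 := hγ.ne'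
  have hFc : Continuous F := by
    simpa [Function.comp_def] using hF.continuous.comp continuous_conj
  have hadd : ∀ l ∈ Lambda γ, ∀ z, F (z + l) - F z = F l - F 0 := fun l hl z => by
    simpa using Lambda.eq_of_continuous_of_forall_mem hγ0 (by fun_prop) (hper l hl) z 0
  have hconjF : Differentiable ℂ (conj ∘ F) := fun z => by
    simpa [Function.comp_def] using (hF (conj z)).conj_conj
  obtain ⟨c, d, hcd⟩ := (Lambda.periodPair γ hγ0).exists_eq_mul_add_of_add_sub_eq hconjF
    fun l hl z => by simp [← map_sub, hadd l ((Lambda.mem_lattice_periodPair_iff hγ0).mp hl)]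
  obtain ⟨a, b, hform⟩ : ∃ a b, ∀ z, F z = a * conj z + b :=
    ⟨conj c, conj d, fun z => by simpa using congrArg conj (hcd z)⟩
  have hinv_affine : ∀ z, (a * conj a - 1) * z + (a * conj b + b) ∈ Lambda γ := fun z => by
    convert hinv z using 1
    simp only [hform, map_add, map_mul, conj_conj]
    ring
  have haa : a * conj a = 1 := by
    linear_combination Lambda.eq_of_continuous_of_forall_mem hγ0 (by fun_prop) hinv_affine 1 0
  have hmap : ∀ l ∈ Lambda γ, a * conj l ∈ Lambda γ := fun l hl => by
    simpa [hform] using hper l hl 0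
  refine ⟨a, b, hform, haa, ?_, by simpa using hinv_affine 0⟩
  refine subset_antisymm (Set.image_subset_iff.mpr hmap) fun x hx => ⟨a * conj x, hmap x hx, ?_⟩
  show a * conj (a * conj x) = x
  rw [map_mul, conj_conj, ← mul_assoc, haa, one_mul]
end

section
/- The map z ↦ γ·conj(z) descends to a well-defined involution of X_γ — that is, γ·conj(Λ_γ) ⊆ Λ_γ and γ·conj(γ·conj(z)) − z ∈ Λ_γ for all z ∈ ℂ — if and only if |γ| = 1. (This is the involution α_{(−,γ)} appearing for the regions C and D of Table 5.) -/
open Complex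

/-!
Since `γ * conj (γ * conj z) = ‖γ‖² z`, the second condition says that `(‖γ‖² - 1) z ∈ Λ_γ` for
every `z`. The lattice is countable and `ℂ` is not, so this forces `‖γ‖ = 1`. Conversely, if
`γ * conj γ = 1` then `z ↦ γ * conj z` swaps the generators `1` and `γ` of `Λ_γ` and is an
involution of `ℂ`.
-/

open ComplexConjugate

instance : Uncountable ℂ := Set.not_countable_univ_iff.mp not_countable_complex

theorem eq_zero_of_forall_mul_mem_of_countable {K : Type*} [DivisionRing K] [Uncountable K]
    {S : Set K} (hS : S.Countable) {c : K} (h : ∀ z, c * z ∈ S) : c = 0 := by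
  by_contra hc
  refine Set.not_countable_univ ((hS.image (c⁻¹ * ·)).mono fun z _ => ?_)
  exact ⟨c * z, h z, inv_mul_cancel_left₀ hc z⟩

theorem mem_Lambda_iff {γ l : ℂ} : l ∈ Lambda γ ↔ ∃ m n : ℤ, m + n * γ = l := by
  simp [Lambda, AddSubgroup.mem_closure_pair, zsmul_eq_mul]

theorem Lambda_countable (γ : ℂ) : (Lambda γ : Set ℂ).Countable := by
  convert Set.countable_range fun p : ℤ × ℤ => (p.1 : ℂ) + p.2 * γ
  ext
  simp [mem_Lambda_iff]

theorem mul_conj_mul_conj (γ z : ℂ) : γ * conj (γ * conj z) = ‖γ‖ ^ 2 * z := by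
  rw [map_mul, conj_conj, ← mul_assoc, mul_conj']

theorem mul_conj_mem_Lambda {γ l : ℂ} (hγ : ‖γ‖ = 1) (hl : l ∈ Lambda γ) :
    γ * conj l ∈ Lambda γ := by
  obtain ⟨m, n, rfl⟩ := mem_Lambda_iff.mp hl
  have hγγ : γ * conj γ = 1 := by simp [mul_conj', hγ]
  refine mem_Lambda_iff.mpr ⟨n, m, ?_⟩
  simp only [map_add, map_mul, map_intCast]
  linear_combination (-(n : ℂ)) * hγγ

theorem gamma_conj_involution_iff_general (γ : ℂ) :
    ((∀ l ∈ Lambda γ, γ * starRingEnd ℂ l ∈ Lambda γ) ∧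
      (∀ z : ℂ, γ * starRingEnd ℂ (γ * starRingEnd ℂ z) - z ∈ Lambda γ)) ↔
      ‖γ‖ = 1 := by
  simp only [mul_conj_mul_conj, ← sub_one_mul]
  constructor
  · rintro ⟨-, h⟩
    have h1 : (‖γ‖ : ℂ) ^ 2 - 1 = 0 :=
      eq_zero_of_forall_mul_mem_of_countable (Lambda_countable γ) h
    norm_cast at h1
    nlinarith [norm_nonneg γ]
  · intro hγ
    exact ⟨fun _ => mul_conj_mem_Lambda hγ, fun z => by simp [hγ]⟩

/-- The map `z ↦ γ * conj z` descends to a well-defined involution of `X_γ`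
(i.e. `γ · conj (Λ_γ) ⊆ Λ_γ` and `γ · conj (γ · conj z) - z ∈ Λ_γ` for all `z`)
if and only if `|γ| = 1`. -/
theorem gamma_conj_involution_iff (γ : ℂ) (hγ : 0 < γ.im) :
    ((∀ l ∈ Lambda γ, γ * starRingEnd ℂ l ∈ Lambda γ) ∧
      (∀ z : ℂ, γ * starRingEnd ℂ (γ * starRingEnd ℂ z) - z ∈ Lambda γ)) ↔
      ‖γ‖ = 1 :=
  gamma_conj_involution_iff_general γ
end

section
/- Let γ = i. Then multiplication by i satisfies i·Λ_i = Λ_i, hence z ↦ i·z induces a group automorphism h of X_i, and h conjugates the involution induced by z ↦ conj(z) to the involution induced by z ↦ −conj(z): for all x ∈ X_i, h(σ₁(x)) = σ₂(h(x)), where σ₁(p(z)) = p(conj(z)) and σ₂(p(z)) = p(−conj(z)). (This realizes the Alling–Greenleaf isomorphism (X_γ, α_{(−,1)}) ≅ (X_γ, α_{(−,−1)}) in region B.) -/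
open Complex

/-- The complex torus `X_γ = ℂ / Λ_γ`. -/
abbrev XTorus (γ : ℂ) := ℂ ⧸ Lambda γ

/-- The quotient map `p : ℂ → X_γ`. -/
noncomputable def tproj (γ : ℂ) : ℂ → XTorus γ := QuotientAddGroup.mk

noncomputable abbrev mulIEquiv : ℂ ≃+ ℂ := (LinearEquiv.smulOfNeZero ℂ ℂ I I_ne_zero).toAddEquiv

theorem I_mul_mem_Lambda_I {z : ℂ} (hz : z ∈ Lambda I) : I * z ∈ Lambda I := by
  have one_mem : (1 : ℂ) ∈ Lambda I := AddSubgroup.subset_closure (by simp)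
  have I_mem : I ∈ Lambda I := AddSubgroup.subset_closure (by simp)
  have generators : ({1, I} : Set ℂ) ⊆ (Lambda I).comap (AddMonoidHom.mulLeft I) := by
    rintro _ (rfl | rfl) <;> simp [one_mem, I_mem]
  exact AddSubgroup.closure_le _ |>.mpr generators hz

theorem map_mulIEquiv_Lambda_I : (Lambda I).map mulIEquiv.toAddMonoidHom = Lambda I := by
  refine le_antisymm ?_ fun z hz => ⟨-I * z, ?_, ?_⟩
  · rintro _ ⟨z, hz, rfl⟩
    exact I_mul_mem_Lambda_I hz
  · simpa [neg_mul] using I_mul_mem_Lambda_I hz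
  · change I * (-I * z) = z
    rw [← mul_assoc, mul_neg, I_mul_I, neg_neg, one_mul]

noncomputable def mulITorus : XTorus I ≃+ XTorus I :=
  QuotientAddGroup.congr _ _ mulIEquiv map_mulIEquiv_Lambda_I

theorem mulITorus_tproj (z : ℂ) : mulITorus (tproj I z) = tproj I (I * z) := rfl

open ComplexConjugate in
theorem I_mul_conj (z : ℂ) : I * conj z = -conj (I * z) := by
  simp only [map_mul, conj_I]
  ring

/-- For `γ = i` (region `B`): multiplication by `i` preserves the lattice `Λ_i`, hence
induces a group automorphism `h` of `X_i`, and `h` conjugates the involution induced by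
`z ↦ conj z` to the involution induced by `z ↦ -conj z` (the Alling–Greenleaf
isomorphism `(X_γ, α_{(-,1)}) ≅ (X_γ, α_{(-,-1)})`). -/
theorem region_B_isomorphism :
    (fun z => Complex.I * z) '' (Lambda Complex.I : Set ℂ) = (Lambda Complex.I : Set ℂ) ∧
    ∃ h : XTorus Complex.I ≃+ XTorus Complex.I,
      (∀ z : ℂ, h (tproj Complex.I z) = tproj Complex.I (Complex.I * z)) ∧
      ∀ σ₁ σ₂ : XTorus Complex.I → XTorus Complex.I,
        (∀ z : ℂ, σ₁ (tproj Complex.I z) = tproj Complex.I (starRingEnd ℂ z)) →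
        (∀ z : ℂ, σ₂ (tproj Complex.I z) = tproj Complex.I (-(starRingEnd ℂ z))) →
        ∀ x, h (σ₁ x) = σ₂ (h x) := by
  refine ⟨congrArg SetLike.coe map_mulIEquiv_Lambda_I, mulITorus, mulITorus_tproj, ?_⟩
  intro σ₁ σ₂ hσ₁ hσ₂ x
  obtain ⟨z, rfl⟩ : ∃ z, tproj I z = x := QuotientAddGroup.mk_surjective x
  calc mulITorus (σ₁ (tproj I z)) = tproj I (I * starRingEnd ℂ z) := by rw [hσ₁, mulITorus_tproj]
    _ = tproj I (-starRingEnd ℂ (I * z)) := by rw [I_mul_conj]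
    _ = σ₂ (mulITorus (tproj I z)) := by rw [mulITorus_tproj, hσ₂]
end

section
/- Let t > 0, γ = i·t, and let σ be the involution of X_γ induced by z ↦ conj(z). For any y, c ∈ ℂ, the translation T_c(x) = x + p(c) of X_γ conjugates the anti-holomorphic map x ↦ p(y) + σ(x) to the map x ↦ p(y + c − conj(c)) + σ(x). Consequently, for every s ∈ ℝ the involution x ↦ p(1/2 + i·s) + σ(x) is conjugate, via a translation of X_γ, to the involution x ↦ p(1/2) + σ(x). (This realizes the Alling–Greenleaf isomorphism (X_γ, t_y ∘ α_{(−,1)}) ≅ (X_γ, t_{1/2} ∘ α_{(−,1)}) in region A.) -/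
open Complex

/-!
The involution `σ` is additive, being induced by the additive map `conj`; hence conjugating
`x ↦ p y + σ x` by the translation `T_c` only moves the translation part, by `p (c - conj c)`.
Since `c - conj c = 2 i Im c`, choosing `c = -i s / 2` cancels the imaginary part `i s` of `y`.
-/

section QuotientInducedMap

variable {G F : Type*} [AddCommGroup G] [FunLike F G G] [AddMonoidHomClass F G G]
  {L : AddSubgroup G} (f : F) {σ : G ⧸ L → G ⧸ L}

theorem map_sub_of_forall_mk (hσ : ∀ z : G, σ z = (f z : G ⧸ L)) (a b : G ⧸ L) :
    σ (a - b) = σ a - σ b := by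
  induction a using QuotientAddGroup.induction_on
  induction b using QuotientAddGroup.induction_on
  rw [← QuotientAddGroup.mk_sub, hσ, hσ, hσ, map_sub, QuotientAddGroup.mk_sub]

theorem mk_add_map_sub_mk_add_mk (hσ : ∀ z : G, σ z = (f z : G ⧸ L)) (y c : G) (x : G ⧸ L) :
    ((y : G ⧸ L) + σ (x - c)) + c = ((y + c - f c : G) : G ⧸ L) + σ x := by
  rw [map_sub_of_forall_mk f hσ, hσ c, QuotientAddGroup.mk_sub, QuotientAddGroup.mk_add]
  abel

end QuotientInducedMap

theorem conj_neg_I_mul_ofReal_div_two (s : ℝ) :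
    starRingEnd ℂ (-(I * s) / 2) = I * s / 2 := by
  simp only [map_div₀, map_neg, map_mul, conj_I, conj_ofReal, map_ofNat, neg_mul, neg_neg]

theorem region_A_translation_conjugation_general (t : ℝ)
    (σ : XTorus (Complex.I * t) → XTorus (Complex.I * t))
    (hσ : ∀ z : ℂ, σ (tproj (Complex.I * t) z) = tproj (Complex.I * t) (starRingEnd ℂ z)) :
    (∀ y c : ℂ, ∀ x : XTorus (Complex.I * t),
      (tproj (Complex.I * t) y + σ (x - tproj (Complex.I * t) c)) + tproj (Complex.I * t) c
        = tproj (Complex.I * t) (y + c - starRingEnd ℂ c) + σ x) ∧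
    ∀ s : ℝ, ∃ c : ℂ, ∀ x : XTorus (Complex.I * t),
      (tproj (Complex.I * t) (1 / 2 + Complex.I * s) + σ (x - tproj (Complex.I * t) c))
          + tproj (Complex.I * t) c
        = tproj (Complex.I * t) (1 / 2) + σ x := by
  have conjugate := mk_add_map_sub_mk_add_mk (starRingEnd ℂ) hσ
  refine ⟨conjugate, fun s => ⟨-(I * s) / 2, fun x => ?_⟩⟩
  rw [tproj, conjugate, conj_neg_I_mul_ofReal_div_two]
  congr 2
  ring

/-- For `γ = i t` with `t > 0` (region `A`), with `σ` the involution of `X_γ` induced by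
conjugation: the translation `T_c : x ↦ x + p c` conjugates `x ↦ p y + σ x` into
`x ↦ p (y + c - conj c) + σ x`; consequently for every `s ∈ ℝ` the involution
`x ↦ p (1/2 + i s) + σ x` is conjugate via a translation to `x ↦ p (1/2) + σ x`
(the Alling–Greenleaf isomorphism `(X_γ, t_y ∘ α_{(-,1)}) ≅ (X_γ, t_{1/2} ∘ α_{(-,1)})`). -/
theorem region_A_translation_conjugation (t : ℝ) (ht : 0 < t)
    (σ : XTorus (Complex.I * t) → XTorus (Complex.I * t))
    (hσ : ∀ z : ℂ, σ (tproj (Complex.I * t) z) = tproj (Complex.I * t) (starRingEnd ℂ z)) :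
    (∀ y c : ℂ, ∀ x : XTorus (Complex.I * t),
      (tproj (Complex.I * t) y + σ (x - tproj (Complex.I * t) c)) + tproj (Complex.I * t) c
        = tproj (Complex.I * t) (y + c - starRingEnd ℂ c) + σ x) ∧
    ∀ s : ℝ, ∃ c : ℂ, ∀ x : XTorus (Complex.I * t),
      (tproj (Complex.I * t) (1 / 2 + Complex.I * s) + σ (x - tproj (Complex.I * t) c))
          + tproj (Complex.I * t) c
        = tproj (Complex.I * t) (1 / 2) + σ x :=
  region_A_translation_conjugation_general t σ hσ
end
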